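/- Suppose q > 0 is real, Δ > 0 and t are real numbers, and real numbers s1, n satisfy (|s1| - 4√q)^2 ≥ n^2·Δ ≥ 0 with |s1| ≤ 4√q, and m is defined by s1 = 2m + n·t. Then |n| ≤ 4√(q/Δ) and |m| ≤ 2(|t| + √Δ)·√(q/Δ). -/
import Mathlib


/-- Bounds on `m` and `n` in the RM setting. -/
theorem rm_m_n_bounds (q Δ t s1 n m : ℝ) (hq : 0 < q) (hΔ : 0 < Δ)
    (hbound : (|s1| - 4 * Real.sqrt q) ^ 2 ≥ n ^ 2 * Δ)
    (hnn : n ^ 2 * Δ ≥ 0)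
    (hs1 : |s1| ≤ 4 * Real.sqrt q)
    (hm : s1 = 2 * m + n * t) :
    |n| ≤ 4 * Real.sqrt (q / Δ) ∧
      |m| ≤ 2 * (|t| + Real.sqrt Δ) * Real.sqrt (q / Δ) := by
  have hqΔ : (0:ℝ) ≤ q / Δ := le_of_lt (div_pos hq hΔ)
  have hsqΔ : Real.sqrt (q/Δ) ^ 2 = q / Δ := Real.sq_sqrt hqΔ
  have hsq : Real.sqrt q ^ 2 = q := Real.sq_sqrt hq.le
  have hsΔ : Real.sqrt Δ ^ 2 = Δ := Real.sq_sqrt hΔ.le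
  have hmul : Real.sqrt (q/Δ) * Real.sqrt Δ = Real.sqrt q := by
    rw [← Real.sqrt_mul hqΔ]
    congr 1
    field_simp
  have h16 : n ^ 2 * Δ ≤ 16 * q := by nlinarith [abs_nonneg s1, Real.sqrt_nonneg q]
  have hn2 : n ^ 2 ≤ (4 * Real.sqrt (q/Δ)) ^ 2 := by
    rw [mul_pow, hsqΔ, show (4:ℝ)^2 * (q/Δ) = 16*q/Δ by ring, le_div_iff₀ hΔ]
    linarith
  have hn : |n| ≤ 4 * Real.sqrt (q/Δ) := by
    nlinarith [abs_nonneg n, sq_abs n, Real.sqrt_nonneg (q/Δ)]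
  refine ⟨hn, ?_⟩
  have hnt : |n * t| ≤ 4 * Real.sqrt (q/Δ) * |t| := by
    rw [abs_mul]
    exact mul_le_mul_of_nonneg_right hn (abs_nonneg t)
  have hmabs : |m| ≤ (|s1| + |n * t|) / 2 := by
    have : m = (s1 - n * t) / 2 := by linarith
    rw [this, abs_div]
    have := abs_sub (s1) (n*t)
    simp only [abs_two]
    nlinarith [abs_sub_abs_le_abs_sub s1 (n*t), abs_sub s1 (n*t), abs_nonneg (s1 - n*t)]
  have : |s1| ≤ 4 * (Real.sqrt (q/Δ) * Real.sqrt Δ) := by rw [hmul]; linarith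
  nlinarith [abs_nonneg t, Real.sqrt_nonneg (q/Δ), Real.sqrt_nonneg Δ]
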